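/- Let τ be a Salem number and let n ≥ 1 be a natural number. Then τⁿ is a Salem number. -/

import Mathlib

/-!
The conjugates of `τ ^ n` are exactly the `n`-th powers of the conjugates of `τ`: every
`ℚ`-embedding of `ℚ(τⁿ)` into `ℂ` extends to `ℚ(τ)`. Raising to the `n`-th power keeps the
conjugates `≠ τ` in the closed unit disc and those on the unit circle on it, while `τⁿ > 1`
keeps the latter distinct from `τⁿ`.
-/

/-- A Salem number: a real algebraic integer `τ > 1` such that every complex root of its
minimal polynomial over `ℚ` other than `τ` itself has absolute value at most `1`, and at
least one such root has absolute value exactly `1`. -/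
def IsSalem (τ : ℝ) : Prop :=
  1 < τ ∧ IsIntegral ℤ τ ∧
    (∀ z : ℂ, Polynomial.aeval z (minpoly ℚ τ) = 0 → z ≠ (τ : ℂ) → ‖z‖ ≤ 1) ∧
    (∃ z : ℂ, Polynomial.aeval z (minpoly ℚ τ) = 0 ∧ z ≠ (τ : ℂ) ∧ ‖z‖ = 1)

open Polynomial IntermediateField

theorem aeval_minpoly_aeval_eq_zero_iff {K L : Type*} [Field K] [Field L] [Algebra K L]
    {x : L} (hx : IsIntegral K x) (hsplit : ((minpoly K x).map (algebraMap K L)).Splits)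
    (p : K[X]) (y : L) :
    aeval y (minpoly K (aeval x p)) = 0 ↔ ∃ w, aeval w (minpoly K x) = 0 ∧ aeval w p = y := by
  have hK : ∀ s ∈ ({x} : Set L), IsIntegral K s ∧ ((minpoly K s).map (algebraMap K L)).Splits := by
    rintro s rfl; exact ⟨hx, hsplit⟩
  set g := AdjoinSimple.gen K x
  have hgp : ((aeval g p : K⟮x⟯) : L) = aeval x p := (aeval_coe _ _ _).symm
  constructor
  · intro hy
    rw [← hgp] at hy
    obtain ⟨φ, hφ⟩ := exists_algHom_adjoin_of_splits_of_aeval hK (aeval g p).2 hy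
    refine ⟨φ g, ?_, (aeval_algHom_apply φ g p).trans hφ⟩
    rw [← minpoly_gen]
    exact minpoly.aeval_algHom _ φ g
  · rintro ⟨w, hw, rfl⟩
    obtain ⟨φ, rfl⟩ := exists_algHom_adjoin_of_splits_of_aeval hK (mem_adjoin_simple_self K x) hw
    rw [← hgp, ← minpoly_eq]
    change aeval (aeval (φ g) p) _ = 0
    rw [aeval_algHom_apply φ g p]
    exact minpoly.aeval_algHom _ φ _

theorem aeval_minpoly_pow_eq_zero_iff {K L : Type*} [Field K] [Field L] [Algebra K L]
    [IsAlgClosed L] {x : L} (hx : IsIntegral K x) (n : ℕ) (y : L) :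
    aeval y (minpoly K (x ^ n)) = 0 ↔ ∃ w, aeval w (minpoly K x) = 0 ∧ w ^ n = y := by
  simpa using aeval_minpoly_aeval_eq_zero_iff hx (IsAlgClosed.splits _) (X ^ n) y

theorem minpoly_ofReal (x : ℝ) : minpoly ℚ (x : ℂ) = minpoly ℚ x :=
  minpoly.algebraMap_eq (algebraMap ℝ ℂ).injective x

/-- A positive power of a Salem number is a Salem number. -/
theorem salem_pow (τ : ℝ) (hτ : IsSalem τ) (n : ℕ) (hn : 1 ≤ n) :
    IsSalem (τ ^ n) := by
  obtain ⟨hτ_gt, hτ_int, hconj_le, w₀, hw₀, hw₀_ne, hw₀_norm⟩ := hτ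
  have hτ_intℚ : IsIntegral ℚ (τ : ℂ) := hτ_int.tower_top.algebraMap
  have hroots (z : ℂ) :
      aeval z (minpoly ℚ (τ ^ n)) = 0 ↔ ∃ w, aeval w (minpoly ℚ τ) = 0 ∧ w ^ n = z := by
    rw [← minpoly_ofReal, ← minpoly_ofReal, Complex.ofReal_pow]
    exact aeval_minpoly_pow_eq_zero_iff hτ_intℚ n z
  have hτn_gt : 1 < τ ^ n := one_lt_pow₀ hτ_gt (by omega)
  refine ⟨hτn_gt, hτ_int.pow n, ?_, w₀ ^ n, (hroots _).2 ⟨w₀, hw₀, rfl⟩, ?_, ?_⟩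
  · rintro z hz hz_ne
    obtain ⟨w, hw, rfl⟩ := (hroots z).1 hz
    have hw_ne : w ≠ τ := by rintro rfl; exact hz_ne (Complex.ofReal_pow τ n).symm
    rw [norm_pow]
    exact pow_le_one₀ (norm_nonneg w) (hconj_le w hw hw_ne)
  · intro h
    have := congrArg norm h
    rw [norm_pow, hw₀_norm, one_pow, Complex.norm_real, Real.norm_of_nonneg (by positivity)] at this
    linarith
  · rw [norm_pow, hw₀_norm, one_pow]
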